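/- For every integer a ≥ 1 and n ≥ 1, the metallic cube Π^a_n contains a Hamiltonian path, i.e., a path visiting every vertex exactly once. -/

import Mathlib

/-- Strings of length `n` over the alphabet `{0,1,…,a}` in which the letter `a`
occurs only immediately after a `0` (i.e. `a` appears only inside blocks `0a`). -/
def MetallicOK (a n : ℕ) (α : Fin n → Fin (a + 1)) : Prop :=
  ∀ i : Fin n, (α i : ℕ) = a →
    ∃ j : Fin n, (j : ℕ) + 1 = (i : ℕ) ∧ (α j : ℕ) = 0

instance (a n : ℕ) : DecidablePred (MetallicOK a n) := fun α => by
  unfold MetallicOK; infer_instance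

/-- Vertices of the metallic cube `Π^a_n`. -/
abbrev MetallicVertex (a n : ℕ) : Type :=
  {α : Fin n → Fin (a + 1) // MetallicOK a n α}

/-- The metallic cube `Π^a_n`: two strings are adjacent iff `Σ_i |α_i - β_i| = 1`. -/
def metallicCube (a n : ℕ) : SimpleGraph (MetallicVertex a n) where
  Adj u v := (∑ i : Fin n, Nat.dist (u.1 i : ℕ) (v.1 i : ℕ)) = 1
  symm := by
    constructor
    intro u v h
    simpa [Nat.dist_comm] using h
  loopless := by
    constructor
    intro u h
    simp [Nat.dist_self] at h

instance (a n : ℕ) : DecidableRel (metallicCube a n).Adj := fun u v =>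
  inferInstanceAs (Decidable ((∑ i : Fin n, Nat.dist (u.1 i : ℕ) (v.1 i : ℕ)) = 1))

/-!
A word of `Π^a_{n+2}` ends either in a letter `c < a` or in the block `0a`. The words of the
first kind span a copy of the box product `Π^a_{n+1} □ P_a`, traversed column by column (a
boustrophedon) along a Hamiltonian path of `Π^a_{n+1}`; those of the second kind span a copy of
`Π^a_n`, traversed along a Hamiltonian path of `Π^a_n`. The path of `Π^a_{n+1}` built this way
starts at `x0`, where `x` is the first vertex of the path of `Π^a_n`; orienting both paths by the
parity of `a`, the boustrophedon ends at `x0(a-1)`, which is adjacent to `x0a`, where the second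
part starts.
-/

namespace List

variable {α β : Type*}

def boustrophedon (l : List α) : List β → List (α × β)
  | [] => []
  | b :: bs => l.map (·, b) ++ boustrophedon l.reverse bs

@[simp]
theorem nil_boustrophedon (bs : List β) : boustrophedon ([] : List α) bs = [] := by
  induction bs <;> simp [boustrophedon, *]

@[simp]
theorem mem_boustrophedon {l : List α} {bs : List β} {p : α × β} :
    p ∈ boustrophedon l bs ↔ p.1 ∈ l ∧ p.2 ∈ bs := by
  induction bs generalizing l with
  | nil => simp [boustrophedon]
  | cons b bs ih =>
    rw [boustrophedon, mem_append, ih, mem_reverse, mem_cons, and_or_left]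
    cases p
    simp [and_comm, eq_comm]

theorem nodup_boustrophedon {l : List α} {bs : List β} (hl : l.Nodup) (hbs : bs.Nodup) :
    (boustrophedon l bs).Nodup := by
  induction bs generalizing l with
  | nil => exact nodup_nil
  | cons b bs ih =>
    obtain ⟨hb, hbs⟩ := nodup_cons.1 hbs
    refine (hl.map fun _ _ h => (Prod.ext_iff.1 h).1).append (ih (nodup_reverse.2 hl) hbs) ?_
    simp only [List.Disjoint, mem_map, mem_boustrophedon]
    rintro _ ⟨x, -, rfl⟩ ⟨-, h⟩
    exact hb h

theorem head?_boustrophedon_cons (l : List α) (b : β) (bs : List β) :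
    (boustrophedon l (b :: bs)).head? = l.head?.map (·, b) := by
  cases l <;> simp [boustrophedon]

theorem getLast?_boustrophedon_concat (l : List α) (bs : List β) (b : β) :
    (boustrophedon l (bs ++ [b])).getLast? =
      (if Even bs.length then l.getLast? else l.head?).map (·, b) := by
  induction bs generalizing l with
  | nil => simp [boustrophedon, getLast?_map]
  | cons c bs ih =>
    rw [cons_append, boustrophedon, getLast?_append, ih, length_cons]
    simp only [Nat.even_add_one]
    cases l <;> by_cases h : Even bs.length <;> simp [h, getLast?_reverse, getLast?_cons]

theorem isChain_boustrophedon {G : SimpleGraph α} {H : SimpleGraph β} {l : List α}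
    {bs : List β} (hl : l.IsChain G.Adj) (hbs : bs.IsChain H.Adj) :
    (boustrophedon l bs).IsChain (G □ H).Adj := by
  induction bs generalizing l with
  | nil => exact .nil
  | cons b bs ih =>
    rw [boustrophedon, isChain_append, isChain_map]
    refine ⟨hl.imp fun _ _ h => SimpleGraph.boxProd_adj_left.2 h,
      ih (isChain_reverse.2 (hl.imp fun _ _ h => h.symm)) hbs.tail, ?_⟩
    cases bs with
    | nil => simp [boustrophedon]
    | cons c bs =>
      rw [head?_boustrophedon_cons, getLast?_map, head?_reverse]
      intro p hp q hq
      simp only [Option.mem_def, Option.map_eq_some_iff] at hp hq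
      obtain ⟨x, hx, rfl⟩ := hp
      obtain ⟨y, hy, rfl⟩ := hq
      cases hx.symm.trans hy
      exact SimpleGraph.boxProd_adj_right.2 (isChain_cons_cons.1 hbs).1

end List

namespace SimpleGraph

variable {V : Type*}

structure IsHamiltonianList (G : SimpleGraph V) (l : List V) : Prop where
  isChain : l.IsChain G.Adj
  nodup : l.Nodup
  mem : ∀ v, v ∈ l

theorem IsHamiltonianList.exists_isHamiltonian [DecidableEq V] [Nonempty V] {G : SimpleGraph V}
    {l : List V} (h : G.IsHamiltonianList l) :
    ∃ (u v : V) (p : G.Walk u v), p.IsHamiltonian := by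
  have hne : l ≠ [] := List.ne_nil_of_mem (h.mem (Classical.arbitrary V))
  refine ⟨_, _, Walk.ofSupport l hne h.isChain, ?_⟩
  exact ((Walk.isPath_def _).2 (by simpa using h.nodup)).isHamiltonian_of_mem
    (by simpa using h.mem)

theorem isChain_finRange_pathGraph (n : ℕ) : (List.finRange n).IsChain (pathGraph n).Adj :=
  List.isChain_iff_getElem.2 fun i hi => by simp [pathGraph_adj]

end SimpleGraph

theorem Fin.sum_dist_snoc {k n : ℕ} (u v : Fin n → Fin k) (c d : Fin k) :
    ∑ i, Nat.dist (snoc (α := fun _ => Fin k) u c i : ℕ) (snoc (α := fun _ => Fin k) v d i) =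
      ∑ i, Nat.dist (u i : ℕ) (v i) + Nat.dist c d := by
  simp [sum_univ_castSucc]

theorem metallicOK_snoc_iff {a n : ℕ} {w : Fin n → Fin (a + 1)} {c : Fin (a + 1)} :
    MetallicOK a (n + 1) (Fin.snoc w c) ↔
      MetallicOK a n w ∧
        ((c : ℕ) = a → ∃ j : Fin n, (j : ℕ) + 1 = n ∧ (w j : ℕ) = 0) := by
  simp only [MetallicOK, Fin.forall_fin_succ', Fin.exists_fin_succ', Fin.snoc_castSucc,
    Fin.snoc_last, Fin.val_castSucc, Fin.val_last]
  refine and_congr (forall_congr' fun i => imp_congr_right fun _ => or_iff_left ?_)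
    (imp_congr_right fun _ => by simp)
  have := i.isLt
  omega

theorem metallicCube_adj_iff {a n : ℕ} {u v : MetallicVertex a n} :
    (metallicCube a n).Adj u v ↔ ∑ i, Nat.dist (u.1 i : ℕ) (v.1 i) = 1 :=
  Iff.rfl

namespace MetallicVertex

open SimpleGraph

variable {m n : ℕ}

def zero : MetallicVertex (m + 1) n :=
  ⟨0, fun _ h => by simp at h⟩

def snoc (u : MetallicVertex (m + 1) n) (c : Fin (m + 1)) : MetallicVertex (m + 1) (n + 1) :=
  ⟨Fin.snoc u.1 c.castSucc, metallicOK_snoc_iff.2 ⟨u.2, fun h => absurd h (by simp; omega)⟩⟩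

def snocZeroTop (u : MetallicVertex (m + 1) n) : MetallicVertex (m + 1) (n + 2) :=
  ⟨Fin.snoc (u.snoc 0).1 (Fin.last _),
    metallicOK_snoc_iff.2 ⟨(u.snoc 0).2, fun _ => ⟨Fin.last n, rfl, by simp [snoc]⟩⟩⟩

theorem snoc_injective :
    Function.Injective fun p : MetallicVertex (m + 1) n × Fin (m + 1) => p.1.snoc p.2 := by
  rintro ⟨u, c⟩ ⟨v, d⟩ h
  simpa [snoc, Subtype.ext_iff, Fin.snoc_inj] using h

theorem snocZeroTop_injective : Function.Injective (snocZeroTop : MetallicVertex (m + 1) n → _) :=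
  fun u v h => by simpa [snocZeroTop, snoc, Subtype.ext_iff, Fin.snoc_inj] using h

theorem snoc_ne_snocZeroTop (u : MetallicVertex (m + 1) (n + 1)) (c : Fin (m + 1))
    (w : MetallicVertex (m + 1) n) : u.snoc c ≠ w.snocZeroTop := fun h => by
  have := congrArg Fin.val (congrFun (congrArg Subtype.val h) (Fin.last _))
  simp [snoc, snocZeroTop] at this
  omega

def snocHom :
    (metallicCube (m + 1) n).boxProd (pathGraph (m + 1)) →g metallicCube (m + 1) (n + 1) where
  toFun p := p.1.snoc p.2
  map_rel' {p q} h := by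
    rw [metallicCube_adj_iff, snoc, snoc, Fin.sum_dist_snoc]
    rcases boxProd_adj.1 h with ⟨huv, hcd⟩ | ⟨hcd, huv⟩
    · simpa [hcd, metallicCube_adj_iff] using huv
    · simp only [huv, Nat.dist_self, Finset.sum_const_zero, zero_add, Fin.val_castSucc]
      rw [pathGraph_adj] at hcd
      unfold Nat.dist
      omega

def snocZeroTopHom : metallicCube (m + 1) n →g metallicCube (m + 1) (n + 2) where
  toFun := snocZeroTop
  map_rel' {u v} h := by
    rw [metallicCube_adj_iff, snocZeroTop, snocZeroTop, Fin.sum_dist_snoc, snoc, snoc,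
      Fin.sum_dist_snoc]
    simpa [metallicCube_adj_iff] using h

theorem adj_snoc_last_snocZeroTop (u : MetallicVertex (m + 1) n) :
    (metallicCube (m + 1) (n + 2)).Adj ((u.snoc 0).snoc (Fin.last m)) u.snocZeroTop := by
  rw [metallicCube_adj_iff, snocZeroTop, snoc, Fin.sum_dist_snoc]
  simp [Nat.dist]

theorem exists_eq_snoc (v : MetallicVertex (m + 1) (n + 1))
    (hv : (v.1 (Fin.last n) : ℕ) ≠ m + 1) : ∃ u c, v = snoc u c := by
  have hsplit : v.1 = Fin.snoc (Fin.init v.1) (v.1 (Fin.last n)) := (Fin.snoc_init_self v.1).symm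
  have hok := v.2
  rw [hsplit, metallicOK_snoc_iff] at hok
  exact ⟨⟨Fin.init v.1, hok.1⟩, ⟨v.1 (Fin.last n), by omega⟩, Subtype.ext hsplit⟩

theorem exists_eq_snocZeroTop (v : MetallicVertex (m + 1) (n + 2))
    (hv : (v.1 (Fin.last _) : ℕ) = m + 1) : ∃ u, v = snocZeroTop u := by
  have hsplit : v.1 = Fin.snoc (Fin.snoc (Fin.init (Fin.init v.1)) (Fin.init v.1 (Fin.last n)))
      (Fin.last _) := by
    have hlast : v.1 (Fin.last _) = Fin.last _ := Fin.ext hv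
    rw [Fin.snoc_init_self, ← hlast, Fin.snoc_init_self]
  have hok := v.2
  rw [hsplit, metallicOK_snoc_iff, metallicOK_snoc_iff] at hok
  obtain ⟨j, hj, hj0⟩ := hok.2 rfl
  obtain rfl : j = Fin.last n := Fin.ext (by simpa using hj)
  refine ⟨⟨_, hok.1.1⟩, Subtype.ext (hsplit.trans ?_)⟩
  simp only [Fin.snoc_last, Fin.val_eq_zero_iff] at hj0
  simp [snocZeroTop, snoc, ← hj0]

end MetallicVertex

namespace MetallicCube

open SimpleGraph MetallicVertex

variable {m n : ℕ}

/-- Reversing `l` when `a = m + 1` is odd makes the boustrophedon of `orient m l` through the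
`a` columns end in the column of the head of `l` (`getLast?_snake`). -/
def orient {α : Type*} (m : ℕ) (l : List α) : List α :=
  if Even m then l.reverse else l

theorem perm_orient {α : Type*} (l : List α) : (orient m l).Perm l := by
  unfold orient
  split_ifs
  exacts [List.reverse_perm l, List.Perm.refl l]

theorem isChain_orient {α : Type*} {G : SimpleGraph α} {l : List α} (hl : l.IsChain G.Adj) :
    (orient m l).IsChain G.Adj := by
  unfold orient
  split_ifs
  exacts [List.isChain_reverse.2 (hl.imp fun _ _ h => h.symm), hl]

def snake (l : List (MetallicVertex (m + 1) n)) : List (MetallicVertex (m + 1) (n + 1)) :=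
  ((orient m l).boustrophedon (List.finRange (m + 1))).map snocHom

theorem head?_snake (l : List (MetallicVertex (m + 1) n)) :
    (snake l).head? = (orient m l).head?.map (snoc · 0) := by
  rw [snake, List.head?_map, List.finRange_succ, List.head?_boustrophedon_cons, Option.map_map]
  rfl

theorem getLast?_snake (l : List (MetallicVertex (m + 1) n)) :
    (snake l).getLast? = l.head?.map (snoc · (Fin.last m)) := by
  rw [snake, List.getLast?_map, List.finRange_succ_last, List.getLast?_boustrophedon_concat,
    Option.map_map, List.length_map, List.length_finRange, orient]
  by_cases h : Even m <;> simp [h, List.getLast?_reverse] <;> rfl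

theorem snake_ne_nil {l : List (MetallicVertex (m + 1) n)} (hl : l ≠ []) : snake l ≠ [] := by
  rw [Ne, ← List.head?_eq_none_iff, head?_snake, Option.map_eq_none_iff, List.head?_eq_none_iff,
    orient]
  split_ifs <;> simpa using hl

theorem isChain_snake {l : List (MetallicVertex (m + 1) n)}
    (hl : l.IsChain (metallicCube (m + 1) n).Adj) :
    (snake l).IsChain (metallicCube (m + 1) (n + 1)).Adj :=
  List.isChain_map _ |>.2 <| (List.isChain_boustrophedon (isChain_orient hl)
    (isChain_finRange_pathGraph _)).imp fun _ _ h => snocHom.map_rel h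

theorem nodup_snake {l : List (MetallicVertex (m + 1) n)} (hl : l.Nodup) : (snake l).Nodup :=
  (List.nodup_boustrophedon ((perm_orient l).nodup_iff.2 hl) (List.nodup_finRange _)).map
    snoc_injective

theorem snoc_mem_snake {l : List (MetallicVertex (m + 1) n)} {u : MetallicVertex (m + 1) n}
    (hu : u ∈ l) (c : Fin (m + 1)) : u.snoc c ∈ snake l :=
  List.mem_map.2 ⟨(u, c), List.mem_boustrophedon.2
    ⟨(perm_orient l).mem_iff.2 hu, List.mem_finRange c⟩, rfl⟩

variable (m) in
def hamiltonianList : (n : ℕ) → List (MetallicVertex (m + 1) n)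
  | 0 => [zero]
  | 1 => snake (hamiltonianList 0)
  | n + 2 => snake (hamiltonianList (n + 1)) ++ (orient m (hamiltonianList n)).map snocZeroTop

theorem hamiltonianList_ne_nil : ∀ n, hamiltonianList m n ≠ []
  | 0 => List.cons_ne_nil _ _
  | 1 => snake_ne_nil (hamiltonianList_ne_nil 0)
  | n + 2 => List.append_ne_nil_of_left_ne_nil (snake_ne_nil (hamiltonianList_ne_nil (n + 1))) _

theorem head?_hamiltonianList_succ :
    ∀ n, (hamiltonianList m (n + 1)).head? =
      (orient m (hamiltonianList m n)).head?.map (snoc · 0)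
  | 0 => head?_snake _
  | n + 1 => by
    rw [hamiltonianList, List.head?_append_of_ne_nil _ (snake_ne_nil (hamiltonianList_ne_nil _)),
      head?_snake]

theorem isHamiltonianList_hamiltonianList_add_two
    (h₁ : (metallicCube (m + 1) (n + 1)).IsHamiltonianList (hamiltonianList m (n + 1)))
    (h₀ : (metallicCube (m + 1) n).IsHamiltonianList (hamiltonianList m n)) :
    (metallicCube (m + 1) (n + 2)).IsHamiltonianList (hamiltonianList m (n + 2)) where
  isChain := by
    rw [hamiltonianList, List.isChain_append, List.isChain_map]
    refine ⟨isChain_snake h₁.isChain,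
      (isChain_orient h₀.isChain).imp fun _ _ h => snocZeroTopHom.map_rel h, ?_⟩
    rw [getLast?_snake, head?_hamiltonianList_succ, List.head?_map]
    intro x hx y hy
    simp only [Option.map_map, Option.mem_def, Option.map_eq_some_iff] at hx hy
    obtain ⟨u, hu, rfl⟩ := hx
    obtain ⟨w, hw, rfl⟩ := hy
    cases hu.symm.trans hw
    exact adj_snoc_last_snocZeroTop u
  nodup := by
    rw [hamiltonianList]
    refine (nodup_snake h₁.nodup).append
      (((perm_orient _).nodup_iff.2 h₀.nodup).map snocZeroTop_injective) ?_
    simp only [List.Disjoint, snake, List.mem_map]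
    rintro _ ⟨p, -, rfl⟩ ⟨w, -, hw⟩
    exact snoc_ne_snocZeroTop p.1 p.2 w hw.symm
  mem v := by
    rw [hamiltonianList, List.mem_append]
    by_cases hv : (v.1 (Fin.last _) : ℕ) = m + 1
    · obtain ⟨u, rfl⟩ := exists_eq_snocZeroTop v hv
      exact Or.inr (List.mem_map_of_mem ((perm_orient _).mem_iff.2 (h₀.mem u)))
    · obtain ⟨u, c, rfl⟩ := exists_eq_snoc v hv
      exact Or.inl (snoc_mem_snake (h₁.mem u) c)

theorem isHamiltonianList_hamiltonianList :
    ∀ n, (metallicCube (m + 1) n).IsHamiltonianList (hamiltonianList m n)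
  | 0 => ⟨.singleton _, List.nodup_singleton _,
      fun _ => List.mem_singleton.2 (Subsingleton.elim _ _)⟩
  | 1 =>
    have h₀ := isHamiltonianList_hamiltonianList 0
    ⟨isChain_snake h₀.isChain, nodup_snake h₀.nodup, fun v => by
      obtain ⟨u, c, rfl⟩ := exists_eq_snoc v fun h => by
        obtain ⟨j, hj, -⟩ := v.2 _ h
        simp at hj
      exact snoc_mem_snake (h₀.mem u) c⟩
  | n + 2 => isHamiltonianList_hamiltonianList_add_two (isHamiltonianList_hamiltonianList (n + 1))
    (isHamiltonianList_hamiltonianList n)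

end MetallicCube

theorem metallic_hamiltonian_path_general (a n : ℕ) (ha : 1 ≤ a) :
    ∃ (u v : MetallicVertex a n) (p : (metallicCube a n).Walk u v),
      p.IsHamiltonian := by
  obtain ⟨m, rfl⟩ := Nat.exists_eq_add_of_le' ha
  have : Nonempty (MetallicVertex (m + 1) n) := ⟨MetallicVertex.zero⟩
  exact (MetallicCube.isHamiltonianList_hamiltonianList n).exists_isHamiltonian

/-- every metallic cube `Π^a_n` (`a ≥ 1`, `n ≥ 1`) contains a
Hamiltonian path, i.e. a walk visiting every vertex exactly once. -/
theorem metallic_hamiltonian_path (a n : ℕ) (ha : 1 ≤ a) (hn : 1 ≤ n) :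
    ∃ (u v : MetallicVertex a n) (p : (metallicCube a n).Walk u v),
      p.IsHamiltonian :=
  metallic_hamiltonian_path_general a n ha
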